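/- arXiv:2602.17507 — 3 statements merged into one kernel-verified Lean document; each statement's English description precedes it below -/
import Mathlib

section
/- The function u(x,t) = √(2λ) cos((x-λt)/2) satisfies the general KdV equation u_t + (u³)_x + (u·(u²)_{xx})_x = 0 at every point (x,t) with |x-λt| < π. -/
/-!
For the travelling cosine `u = c cos θ`, `θ = (x - λt)/2`, the identity `cos² θ = (1 + cos 2θ)/2`
makes `(u²)_xx = -(c²/2) cos 2θ` explicit, and the three terms of the equation then sum to
`c (2λ - c²)/4 · sin θ`. The amplitude `c = √(2λ)` is exactly the one that kills this residual.
-/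

open Real

noncomputable def gkdvLHS (u : ℝ → ℝ → ℝ) (x t : ℝ) : ℝ :=
  deriv (fun τ => u x τ) t + deriv (fun y => u y t ^ 3) x +
    deriv (fun y => u y t * deriv (fun z => deriv (fun w => u w t ^ 2) z) y) x

lemma hasDerivAt_cos_sub_div_two (a x : ℝ) :
    HasDerivAt (fun y => cos ((y - a) / 2)) (-sin ((x - a) / 2) / 2) x := by
  simpa [div_eq_mul_inv] using (((hasDerivAt_id x).sub_const a).div_const 2).cos

lemma hasDerivAt_cos_sub (a x : ℝ) : HasDerivAt (fun y => cos (y - a)) (-sin (x - a)) x := by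
  simpa using ((hasDerivAt_id x).sub_const a).cos

lemma sq_mul_cos_sub_div_two (c a : ℝ) :
    (fun y => (c * cos ((y - a) / 2)) ^ 2) = fun y => c ^ 2 / 2 + c ^ 2 / 2 * cos (y - a) := by
  funext y
  rw [mul_pow, cos_sq, show 2 * ((y - a) / 2) = y - a by ring]
  ring

lemma deriv_deriv_sq_mul_cos_sub_div_two (c a : ℝ) :
    deriv (fun z => deriv (fun y => (c * cos ((y - a) / 2)) ^ 2) z)
      = fun y => -(c ^ 2 / 2) * cos (y - a) := by
  funext y
  simp [sq_mul_cos_sub_div_two]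

lemma gkdvLHS_mul_cos (c l x t : ℝ) :
    gkdvLHS (fun x t => c * cos ((x - l * t) / 2)) x t
      = c * (2 * l - c ^ 2) / 4 * sin ((x - l * t) / 2) := by
  have hTime : HasDerivAt (fun τ => c * cos ((x - l * τ) / 2))
      (c * (l / 2) * sin ((x - l * t) / 2)) t := by
    have h := ((((hasDerivAt_id' t).const_mul l).const_sub x).div_const 2).cos.const_mul c
    exact h.congr_deriv (by ring)
  have hU := (hasDerivAt_cos_sub_div_two (l * t) x).const_mul c
  have hCube := hU.fun_pow 3
  have hProd : HasDerivAt
      (fun y => c * cos ((y - l * t) / 2) * (-(c ^ 2 / 2) * cos (y - l * t))) _ x :=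
    hU.mul ((hasDerivAt_cos_sub (l * t) x).const_mul (-(c ^ 2 / 2)))
  unfold gkdvLHS
  beta_reduce
  rw [hTime.deriv, hCube.deriv, deriv_deriv_sq_mul_cos_sub_div_two]
  beta_reduce
  rw [hProd.deriv]
  obtain ⟨θ, hθ⟩ : ∃ θ, x - l * t = 2 * θ := ⟨(x - l * t) / 2, by ring⟩
  rw [hθ, mul_div_cancel_left₀ θ two_ne_zero, sin_two_mul, cos_two_mul]
  ring

/-- The compacton `u(x,t) = √(2λ) cos((x-λt)/2)` satisfies the general KdV
equation `u_t + (u³)_x + (u·(u²)_{xx})_x = 0` wherever `|x - λt| < π`. -/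
theorem stmt_0 (l : ℝ) (hl : 0 < l)
    (u : ℝ → ℝ → ℝ)
    (hu : ∀ x t, u x t = Real.sqrt (2 * l) * Real.cos ((x - l * t) / 2)) :
    ∀ x t : ℝ, |x - l * t| < Real.pi →
      deriv (fun τ => u x τ) t
        + deriv (fun y => (u y t) ^ 3) x
        + deriv (fun y => u y t *
            deriv (fun z => deriv (fun w => (u w t) ^ 2) z) y) x = 0 := by
  intro x t _
  change gkdvLHS u x t = 0
  rw [show u = _ from funext₂ hu, gkdvLHS_mul_cos, sq_sqrt (by positivity)]
  ring
end

section
/- The stability function of a two-stage second-order SI Rosenbrock method with parameters satisfying b₂c̃₂ = 1/2 and b₂β₂₁' = 1/2 − γ is R(z̃,z) = [½z̃² + z̃ + 1 + z(1−2γ)(1+z̃) + z²(½ − 2γ + γ²)]/(1 − γz)². -/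
open Matrix

/-- The stability function of the two-stage second-order SI Rosenbrock method
equals `[½z̃² + z̃ + 1 + z(1-2γ)(1+z̃) + z²(½ - 2γ + γ²)]/(1 - γz)²`. -/
theorem stmt_13 (γ b₂ : ℝ) (hγ : 0 < γ) (hb₂ : b₂ ≠ 0)
    (zt z : ℂ) (hz : 1 - (γ : ℂ) * z ≠ 0)
    (b : Fin 2 → ℂ) (tA B : Matrix (Fin 2) (Fin 2) ℂ)
    (hb : b = ![1 - (b₂ : ℂ), (b₂ : ℂ)])
    (htA : tA = !![0, 0; 1 / (2 * (b₂ : ℂ)), 0])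
    (hB : B = !![(γ : ℂ), 0; (1 / 2 - (γ : ℂ)) / (b₂ : ℂ), (γ : ℂ)]) :
    1 + (zt + z) * (b ⬝ᵥ ((1 - zt • tA - z • B)⁻¹ *ᵥ fun _ => (1 : ℂ)))
      = (zt ^ 2 / 2 + zt + 1 + z * (1 - 2 * (γ : ℂ)) * (1 + zt)
          + z ^ 2 * (1 / 2 - 2 * (γ : ℂ) + (γ : ℂ) ^ 2)) / (1 - (γ : ℂ) * z) ^ 2 := by
  have hb₂' : (b₂ : ℂ) ≠ 0 := by exact_mod_cast hb₂
  have hM : (1 - zt • tA - z • B)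
      = !![1 - (γ : ℂ) * z, 0;
           -(zt / (2 * (b₂ : ℂ)) + z * ((1 / 2 - (γ : ℂ)) / (b₂ : ℂ))), 1 - (γ : ℂ) * z] := by
    subst htA hB
    ext i j
    fin_cases i <;> fin_cases j <;>
      simp [Matrix.one_apply] <;> try ring
  have hinv : (1 - zt • tA - z • B)⁻¹
      = !![1 / (1 - (γ : ℂ) * z), 0;
           (zt / (2 * (b₂ : ℂ)) + z * ((1 / 2 - (γ : ℂ)) / (b₂ : ℂ))) / (1 - (γ : ℂ) * z) ^ 2,
           1 / (1 - (γ : ℂ) * z)] := by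
    rw [hM]
    apply Matrix.inv_eq_right_inv
    ext i j
    fin_cases i <;> fin_cases j <;>
      simp [Matrix.mul_apply, Fin.sum_univ_two, Matrix.one_apply] <;>
      field_simp <;> try ring
  rw [hinv, hb, eq_div_iff (pow_ne_zero 2 hz)]
  simp only [Matrix.mulVec, dotProduct, Fin.sum_univ_two,
    Matrix.cons_val', Matrix.cons_val_zero, Matrix.cons_val_one, Matrix.head_cons,
    Matrix.empty_val', Matrix.cons_val_fin_one, Matrix.head_fin_const,
    Matrix.of_apply]
  have hd : (1 - (γ : ℂ) * z) * (1 - (γ : ℂ) * z)⁻¹ = 1 := mul_inv_cancel₀ hz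
  have hbs : (b₂ : ℂ) * (zt / (2 * (b₂ : ℂ)) + z * ((1 / 2 - (γ : ℂ)) / (b₂ : ℂ)))
      = zt / 2 + z * (1 / 2 - (γ : ℂ)) := by
    field_simp
  simp only [div_eq_mul_inv, ← inv_pow]
  linear_combination
    ((zt + z) * (1 - (γ : ℂ) * z)
        + (zt + z) * ((b₂ : ℂ) * (zt / (2 * (b₂ : ℂ)) + z * ((1 / 2 - (γ : ℂ)) / (b₂ : ℂ))))
          * ((1 - (γ : ℂ) * z) * (1 - (γ : ℂ) * z)⁻¹ + 1)) * hd
      + (zt + z) * hbs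
end

section
/- In the scalar local-error recursion of the semi-implicit predictor–corrector analysis with p* = p − 2 and one correction, the corrected error satisfies e₁(Δt) = b·J'·c·Δt^{p} + O(Δt^{p+1}), so the method achieves only order p − 1; after a second correction, e₂(Δt) = O(Δt^{p+1}), achieving order p. -/
open Asymptotics Filter

/-- Scalar local-error recursion with predictor order `p* = p - 2`: after one
correction the error is `b·J'·c·Δt^p + O(Δt^{p+1})` (order `p-1` only), and
after a second correction it is `O(Δt^{p+1})` (order `p`). -/
theorem stmt_16 (b J J' c C d : ℝ) (p : ℕ) (hp : 3 ≤ p)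
    (e : ℕ → ℝ → ℝ)
    (h0 : (fun Δt => e 0 Δt - c * Δt ^ (p - 1)) =O[nhdsWithin 0 (Set.Ioi 0)]
      fun Δt => Δt ^ p)
    (hrec : ∀ k, (fun Δt => (1 - Δt * b * J) * e (k + 1) Δt
        - (Δt * b * J' * e k Δt + C * Δt ^ (p + 1) * d)) =O[nhdsWithin 0 (Set.Ioi 0)]
      fun Δt => Δt ^ (p + 2)) :
    ((fun Δt => e 1 Δt - b * J' * c * Δt ^ p) =O[nhdsWithin 0 (Set.Ioi 0)]
        fun Δt => Δt ^ (p + 1))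
      ∧ ((fun Δt => e 2 Δt) =O[nhdsWithin 0 (Set.Ioi 0)]
        fun Δt => Δt ^ (p + 1)) := by
  obtain ⟨q, rfl⟩ : ∃ q, p = q + 3 := ⟨p - 3, by omega⟩
  set l := nhdsWithin (0:ℝ) (Set.Ioi 0) with hl
  have hid : (fun t : ℝ => t) =O[l] (fun _ => (1:ℝ)) :=
    (tendsto_id.mono_left nhdsWithin_le_nhds).isBigO_one ℝ
  have hstep : ∀ n : ℕ, (fun t : ℝ => t ^ (n+1)) =O[l] (fun t => t ^ n) := by
    intro n
    have h1 : (fun t : ℝ => t * t ^ n) =O[l] (fun t => 1 * t ^ n) :=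
      hid.mul (isBigO_refl _ _)
    have e1 : (fun t : ℝ => t ^ (n+1)) = fun t => t * t ^ n := by
      funext t; ring
    have e2 : (fun t : ℝ => 1 * t ^ n) = fun t : ℝ => t ^ n := by
      funext t; ring
    rw [e1]; rw [e2] at h1; exact h1
  have hidO : ∀ (a : ℝ) (n : ℕ), (fun t : ℝ => t * a * t ^ n) =O[l] (fun t => t ^ (n+1)) := by
    intro a n
    have : (fun t : ℝ => t * a * t ^ n) = fun t => a * t ^ (n+1) := by
      funext t; ring
    rw [this]
    exact (isBigO_refl (fun t : ℝ => t ^ (n+1)) l).const_mul_left a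
  have hinv : ∀ f g : ℝ → ℝ,
      (fun t => (1 - t * b * J) * f t) =O[l] g → f =O[l] g := by
    intro f g h
    have h1 : Tendsto (fun t : ℝ => |1 - t * b * J|) l (nhds 1) := by
      have : Tendsto (fun t : ℝ => 1 - t * b * J) (nhds 0) (nhds 1) := by
        have h := Continuous.tendsto
          (by continuity : Continuous fun t : ℝ => 1 - t * b * J) 0
        simpa using h
      have h2 := (this.mono_left (nhdsWithin_le_nhds (s := Set.Ioi (0:ℝ)))).abs
      simpa using h2
    have hev : ∀ᶠ t in l, (1:ℝ)/2 < |1 - t * b * J| :=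
      h1.eventually (eventually_gt_nhds (by norm_num))
    have hOf : f =O[l] fun t => (1 - t * b * J) * f t := by
      refine IsBigO.of_bound 2 ?_
      filter_upwards [hev] with t ht
      have h2 : |f t| ≤ 2 * (|1 - t * b * J| * |f t|) := by
        nlinarith [abs_nonneg (f t), abs_nonneg (1 - t * b * J)]
      simpa [abs_mul] using h2
    exact hOf.trans h
  have hA : (fun t : ℝ => t * b * J' * e 0 t - b * J' * c * t ^ (q+3)) =O[l]
      fun t => t ^ (q+4) := by
    have hm : (fun t : ℝ => (t * (b * J')) * (e 0 t - c * t ^ (q+2))) =O[l]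
        fun t => t * t ^ (q+3) := by
      refine IsBigO.mul ?_ (by simpa using h0)
      have hc : (fun t : ℝ => t * (b * J')) = fun t => (b * J') * t := by funext t; ring
      rw [hc]; exact (isBigO_refl (fun t : ℝ => t) l).const_mul_left _
    have e1 : (fun t : ℝ => (t * (b * J')) * (e 0 t - c * t ^ (q+2)))
        = fun t => t * b * J' * e 0 t - b * J' * c * t ^ (q+3) := by
      funext t; ring
    have e2 : (fun t : ℝ => t * t ^ (q+3)) = fun t : ℝ => t ^ (q+4) := by
      funext t; ring
    rw [e1, e2] at hm; exact hm
  have hC : (fun t : ℝ => C * t ^ (q+4) * d) =O[l] fun t => t ^ (q+4) := by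
    have : (fun t : ℝ => C * t ^ (q+4) * d) = fun t => (C * d) * t ^ (q+4) := by
      funext t; ring
    rw [this]
    exact (isBigO_refl _ _).const_mul_left _
  -- first correction
  have F1 : (fun t : ℝ => (1 - t * b * J) * (e 1 t - b * J' * c * t ^ (q+3))) =O[l]
      fun t => t ^ (q+4) := by
    have hsum := (((hrec 0).trans (hstep (q+4))).add hA).add hC |>.add
      (hidO (b * J * (b * J' * c)) (q+3))
    have e1 : (fun t : ℝ => (1 - t * b * J) * e 1 t
          - (t * b * J' * e 0 t + C * (t:ℝ) ^ (q+3+1) * d)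
          + (t * b * J' * e 0 t - b * J' * c * t ^ (q+3))
          + C * t ^ (q+4) * d
          + t * (b * J * (b * J' * c)) * t ^ (q+3))
        = fun t : ℝ => (1 - t * b * J) * (e 1 t - b * J' * c * t ^ (q+3)) := by
      funext t; ring
    rw [e1] at hsum
    exact hsum
  have goal1 : (fun t : ℝ => e 1 t - b * J' * c * t ^ (q+3)) =O[l]
      fun t => t ^ (q+4) := hinv _ _ F1
  -- second correction
  have he1 : (fun t : ℝ => e 1 t) =O[l] fun t => t ^ (q+3) := by
    have hsum := (goal1.trans (hstep (q+3))).add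
      ((isBigO_refl (fun t : ℝ => t ^ (q+3)) l).const_mul_left (b * J' * c))
    have e1 : (fun t : ℝ => e 1 t - b * J' * c * t ^ (q+3) + b * J' * c * t ^ (q+3))
        = fun t : ℝ => e 1 t := by funext t; ring
    rw [e1] at hsum
    exact hsum
  have hB : (fun t : ℝ => t * b * J' * e 1 t) =O[l] fun t => t ^ (q+4) := by
    have hm : (fun t : ℝ => (t * (b * J')) * e 1 t) =O[l]
        fun t => t * t ^ (q+3) := by
      refine IsBigO.mul ?_ he1
      have hc : (fun t : ℝ => t * (b * J')) = fun t => (b * J') * t := by funext t; ring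
      rw [hc]; exact (isBigO_refl (fun t : ℝ => t) l).const_mul_left _
    have e1 : (fun t : ℝ => (t * (b * J')) * e 1 t) = fun t => t * b * J' * e 1 t := by
      funext t; ring
    have e2 : (fun t : ℝ => t * t ^ (q+3)) = fun t : ℝ => t ^ (q+4) := by
      funext t; ring
    rw [e1, e2] at hm; exact hm
  have F2 : (fun t : ℝ => (1 - t * b * J) * e 2 t) =O[l] fun t => t ^ (q+4) := by
    have hsum := (((hrec 1).trans (hstep (q+4))).add hB).add hC
    have e1 : (fun t : ℝ => (1 - t * b * J) * e 2 t
          - (t * b * J' * e 1 t + C * (t:ℝ) ^ (q+3+1) * d)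
          + t * b * J' * e 1 t + C * t ^ (q+4) * d)
        = fun t : ℝ => (1 - t * b * J) * e 2 t := by
      funext t; ring
    rw [e1] at hsum
    exact hsum
  exact ⟨by simpa using goal1, by simpa using hinv _ _ F2⟩
end
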